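/- Let r > 0 be non-integer with ⌊r⌋ ≥ 1, p ≥ 1, satisfying 2⌊r⌋^p > r^p, ⌊r⌋^p + (⌊r⌋−1)^p ≤ r^p, and 2⌊r⌋^p ≤ (⌊r⌋+1)^p. Then the lattice in ℤ² generated by (2⌊r⌋+1, −1) and (2⌊r⌋−1, 2⌊r⌋) has determinant 4⌊r⌋² + 4⌊r⌋ − 1 and the ℓ_p ball of radius r in ℤ² has exactly (2⌊r⌋+1)² − 4 points, so the discrete packing density is ((2⌊r⌋+1)² − 4)/(4⌊r⌋² + 4⌊r⌋ − 1). -/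

import Mathlib

/-!
Write `n = ⌊r⌋`. An integer point lies in the ℓp ball of radius `r` only if each coordinate is
at most `r`, hence at most `n`, in absolute value; the corners `(±n, ±n)` are excluded because
`2 n^p > r^p`, while every other point of the square has a coordinate of absolute value at most
`n - 1` and `n^p + (n-1)^p ≤ r^p`. So the ball is the square `[-n, n]²` minus its four corners.
-/

open Finset

section IntCube

variable (ι : Type*) [Fintype ι] [DecidableEq ι]

noncomputable def intCube (n : ℤ) : Finset (ι → ℤ) := Fintype.piFinset fun _ => Icc (-n) n

def intCubeCorners (n : ℤ) : Finset (ι → ℤ) := Fintype.piFinset fun _ => {-n, n}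

variable {ι}

theorem mem_intCube {n : ℤ} {x : ι → ℤ} : x ∈ intCube ι n ↔ ∀ i, |x i| ≤ n := by
  simp [intCube, abs_le]

theorem mem_intCubeCorners {n : ℤ} (hn : 0 ≤ n) {x : ι → ℤ} :
    x ∈ intCubeCorners ι n ↔ ∀ i, |x i| = n := by
  simp [intCubeCorners, abs_eq hn, or_comm]

theorem intCubeCorners_subset_intCube {n : ℤ} (hn : 0 ≤ n) :
    intCubeCorners ι n ⊆ intCube ι n := fun x hx => by
  rw [mem_intCubeCorners hn] at hx
  exact mem_intCube.2 fun i => (hx i).le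

theorem card_intCube {n : ℤ} (hn : 0 ≤ n) :
    (#(intCube ι n) : ℤ) = (2 * n + 1) ^ Fintype.card ι := by
  rw [intCube, Fintype.card_piFinset, prod_const, card_univ, Int.card_Icc, Nat.cast_pow,
    Int.toNat_of_nonneg (by omega)]
  ring

theorem card_intCubeCorners {n : ℤ} (hn : 0 < n) :
    #(intCubeCorners ι n) = 2 ^ Fintype.card ι := by
  rw [intCubeCorners, Fintype.card_piFinset, prod_const, card_univ, card_pair (by omega)]

theorem card_intCube_sdiff_intCubeCorners {n : ℤ} (hn : 0 < n) :
    (#(intCube ι n \ intCubeCorners ι n) : ℤ) =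
      (2 * n + 1) ^ Fintype.card ι - 2 ^ Fintype.card ι := by
  have hsub := intCubeCorners_subset_intCube (ι := ι) hn.le
  rw [card_sdiff_of_subset hsub, Nat.cast_sub (card_le_card hsub), card_intCube hn.le,
    card_intCubeCorners hn, Nat.cast_pow, Nat.cast_ofNat]

end IntCube

theorem abs_le_floor_of_abs_rpow_le {p r : ℝ} (hp : 0 < p) (hr : 0 ≤ r) {a : ℤ}
    (h : |(a : ℝ)| ^ p ≤ r ^ p) : |a| ≤ ⌊r⌋ :=
  Int.le_floor.2 <| by
    rw [Int.cast_abs]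
    exact (Real.rpow_le_rpow_iff (abs_nonneg _) hr hp).1 h

theorem abs_rpow_le_of_abs_le {p : ℝ} (hp : 0 ≤ p) {a m : ℤ} (h : |a| ≤ m) :
    |(a : ℝ)| ^ p ≤ (m : ℝ) ^ p :=
  Real.rpow_le_rpow (abs_nonneg _) (by exact_mod_cast h) hp

theorem abs_rpow_add_abs_rpow_le_of_abs_le_floor_sub_one {p r : ℝ} (hp : 0 ≤ p)
    (h2 : (⌊r⌋ : ℝ) ^ p + ((⌊r⌋ : ℝ) - 1) ^ p ≤ r ^ p) {a b : ℤ}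
    (ha : |a| ≤ ⌊r⌋ - 1) (hb : |b| ≤ ⌊r⌋) : |(a : ℝ)| ^ p + |(b : ℝ)| ^ p ≤ r ^ p := by
  have ha' := abs_rpow_le_of_abs_le hp ha
  have hb' := abs_rpow_le_of_abs_le hp hb
  push_cast at ha'
  linarith

theorem abs_rpow_add_abs_rpow_le_iff {p r : ℝ} (hp : 0 < p) (hr : 0 ≤ r)
    (h1 : r ^ p < 2 * (⌊r⌋ : ℝ) ^ p) (h2 : (⌊r⌋ : ℝ) ^ p + ((⌊r⌋ : ℝ) - 1) ^ p ≤ r ^ p)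
    (a b : ℤ) :
    |(a : ℝ)| ^ p + |(b : ℝ)| ^ p ≤ r ^ p ↔
      (|a| ≤ ⌊r⌋ ∧ |b| ≤ ⌊r⌋) ∧ ¬(|a| = ⌊r⌋ ∧ |b| = ⌊r⌋) := by
  have ha0 := Real.rpow_nonneg (abs_nonneg (a : ℝ)) p
  have hb0 := Real.rpow_nonneg (abs_nonneg (b : ℝ)) p
  constructor
  · intro h
    refine ⟨⟨abs_le_floor_of_abs_rpow_le hp hr (by linarith),
      abs_le_floor_of_abs_rpow_le hp hr (by linarith)⟩, ?_⟩
    rintro ⟨ha, hb⟩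
    rw [← Int.cast_abs, ha, ← Int.cast_abs, hb] at h
    linarith
  · rintro ⟨⟨ha, hb⟩, hcorner⟩
    by_cases hbr : |b| = ⌊r⌋
    · have ha' : |a| ≤ ⌊r⌋ - 1 := by omega
      exact abs_rpow_add_abs_rpow_le_of_abs_le_floor_sub_one hp.le h2 ha' hb
    · rw [add_comm]
      exact abs_rpow_add_abs_rpow_le_of_abs_le_floor_sub_one hp.le h2 (by omega) ha

theorem stmt15_general (r : ℝ) (p : ℝ) (hr : 0 < r)
    (hfl : 1 ≤ ⌊r⌋) (hp : 1 ≤ p)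
    (h1 : r ^ p < 2 * ((⌊r⌋ : ℝ)) ^ p)
    (h2 : ((⌊r⌋ : ℝ)) ^ p + ((⌊r⌋ : ℝ) - 1) ^ p ≤ r ^ p) :
    |Matrix.det !![2 * ⌊r⌋ + 1, -1; 2 * ⌊r⌋ - 1, 2 * ⌊r⌋]|
      = 4 * ⌊r⌋ ^ 2 + 4 * ⌊r⌋ - 1 ∧
    (Set.ncard {x : Fin 2 → ℤ | |(x 0 : ℝ)| ^ p + |(x 1 : ℝ)| ^ p ≤ r ^ p} : ℤ)
      = (2 * ⌊r⌋ + 1) ^ 2 - 4 ∧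
    (Set.ncard {x : Fin 2 → ℤ | |(x 0 : ℝ)| ^ p + |(x 1 : ℝ)| ^ p ≤ r ^ p} : ℝ) /
        (4 * (⌊r⌋ : ℝ) ^ 2 + 4 * (⌊r⌋ : ℝ) - 1)
      = ((2 * (⌊r⌋ : ℝ) + 1) ^ 2 - 4) / (4 * (⌊r⌋ : ℝ) ^ 2 + 4 * (⌊r⌋ : ℝ) - 1) := by
  have hball : {x : Fin 2 → ℤ | |(x 0 : ℝ)| ^ p + |(x 1 : ℝ)| ^ p ≤ r ^ p} =
      ↑(intCube (Fin 2) ⌊r⌋ \ intCubeCorners (Fin 2) ⌊r⌋) := by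
    ext x
    simp only [Set.mem_ofPred_eq, coe_sdiff, Set.mem_sdiff, mem_coe, mem_intCube,
      mem_intCubeCorners (by omega : (0 : ℤ) ≤ ⌊r⌋), Fin.forall_fin_two]
    exact abs_rpow_add_abs_rpow_le_iff (by linarith) hr.le h1 h2 _ _
  have hcard : (Set.ncard {x : Fin 2 → ℤ | |(x 0 : ℝ)| ^ p + |(x 1 : ℝ)| ^ p ≤ r ^ p} : ℤ)
      = (2 * ⌊r⌋ + 1) ^ 2 - 4 := by
    rw [hball, Set.ncard_coe_finset, card_intCube_sdiff_intCubeCorners (by omega)]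
    norm_num
  refine ⟨?_, hcard, ?_⟩
  · rw [Matrix.det_fin_two_of, abs_of_nonneg (by nlinarith)]
    ring
  · congr 1
    exact_mod_cast hcard

/-- For non-integer `r > 0` with `⌊r⌋ ≥ 1` and real `p ≥ 1` satisfying
`2⌊r⌋^p > r^p`, `⌊r⌋^p + (⌊r⌋-1)^p ≤ r^p` and `2⌊r⌋^p ≤ (⌊r⌋+1)^p`, the
lattice generated by `(2⌊r⌋+1, -1)` and `(2⌊r⌋-1, 2⌊r⌋)` has determinant
`4⌊r⌋² + 4⌊r⌋ - 1` and the ℓp ball of radius `r` in `ℤ²` has exactly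
`(2⌊r⌋+1)² - 4` points, so the discrete packing density is
`((2⌊r⌋+1)² - 4)/(4⌊r⌋² + 4⌊r⌋ - 1)`. -/
theorem stmt15 (r : ℝ) (p : ℝ) (hr : 0 < r) (hri : ∀ m : ℤ, (m : ℝ) ≠ r)
    (hfl : 1 ≤ ⌊r⌋) (hp : 1 ≤ p)
    (h1 : r ^ p < 2 * ((⌊r⌋ : ℝ)) ^ p)
    (h2 : ((⌊r⌋ : ℝ)) ^ p + ((⌊r⌋ : ℝ) - 1) ^ p ≤ r ^ p)
    (h3 : 2 * ((⌊r⌋ : ℝ)) ^ p ≤ ((⌊r⌋ : ℝ) + 1) ^ p) :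
    |Matrix.det !![2 * ⌊r⌋ + 1, -1; 2 * ⌊r⌋ - 1, 2 * ⌊r⌋]|
      = 4 * ⌊r⌋ ^ 2 + 4 * ⌊r⌋ - 1 ∧
    (Set.ncard {x : Fin 2 → ℤ | |(x 0 : ℝ)| ^ p + |(x 1 : ℝ)| ^ p ≤ r ^ p} : ℤ)
      = (2 * ⌊r⌋ + 1) ^ 2 - 4 ∧
    (Set.ncard {x : Fin 2 → ℤ | |(x 0 : ℝ)| ^ p + |(x 1 : ℝ)| ^ p ≤ r ^ p} : ℝ) /
        (4 * (⌊r⌋ : ℝ) ^ 2 + 4 * (⌊r⌋ : ℝ) - 1)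
      = ((2 * (⌊r⌋ : ℝ) + 1) ^ 2 - 4) / (4 * (⌊r⌋ : ℝ) ^ 2 + 4 * (⌊r⌋ : ℝ) - 1) :=
  stmt15_general r p hr hfl hp h1 h2
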